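/- There exists a Borel set X ⊆ ℝ with 0 ∈ X, 0 a Lebesgue point of χ_X, and a sequence of continuous functions f_n : ℝ → [0,∞) with ∫_ℝ f_n = 1 and lim_{n→∞} ∫_{[−δ,δ]} f_n = 1 for every δ > 0, but ∫_X f_n(x) dx = 0 for all n. (Thus the monotonicity assumptions in the preceding convergence theorem cannot be dropped.) -/

import Mathlib

open MeasureTheory Filter Topology

/-!
Remove from `ℝ` the open intervals `Iₙ = (aₙ, aₙ + aₙ³)` with `aₙ = 2⁻ⁿ`, and let `X` be the
complement. An interval `Iₙ` meeting `[-r, r]` has `aₙ < r`, so `|Iₙ| = aₙ³ ≤ aₙ r²`; hence the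
removed part of `[-r, r]` has measure at most `r² ∑ aₙ = 2 r² = o(r)`, and `0` is a density point
of `X`. Normalised bump functions supported in `Iₙ` then have integral one, concentrate at `0`
because `aₙ → 0`, and vanish on `X`.
-/

open Set Metric

lemma volume_iUnion_Ioo_cube_inter_Icc_le {a : ℕ → ℝ} (ha : ∀ n, 0 ≤ a n) (hsum : Summable a)
    (r : ℝ) :
    volume ((⋃ n, Ioo (a n) (a n + a n ^ 3)) ∩ Icc (-r) r) ≤
      ENNReal.ofReal (r ^ 2 * ∑' n, a n) := by
  have hgap : ∀ n, volume (Ioo (a n) (a n + a n ^ 3) ∩ Icc (-r) r) ≤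
      ENNReal.ofReal (r ^ 2 * a n) := by
    intro n
    rcases le_or_gt r (a n) with hr | hr
    · have hempty : Ioo (a n) (a n + a n ^ 3) ∩ Icc (-r) r = ∅ :=
        eq_empty_iff_forall_notMem.2 fun x hx => by linarith [hx.1.1, hx.2.2]
      simp [hempty]
    · calc volume (Ioo (a n) (a n + a n ^ 3) ∩ Icc (-r) r)
          ≤ volume (Ioo (a n) (a n + a n ^ 3)) := measure_mono inter_subset_left
        _ = ENNReal.ofReal (a n ^ 3) := by rw [Real.volume_Ioo, add_sub_cancel_left]
        _ ≤ ENNReal.ofReal (r ^ 2 * a n) := by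
          gcongr
          nlinarith [ha n, mul_le_mul hr.le hr.le (ha n) (ha n |>.trans hr.le)]
  calc volume ((⋃ n, Ioo (a n) (a n + a n ^ 3)) ∩ Icc (-r) r)
      ≤ ∑' n, volume (Ioo (a n) (a n + a n ^ 3) ∩ Icc (-r) r) := by
        rw [iUnion_inter]; exact measure_iUnion_le _
    _ ≤ ∑' n, ENNReal.ofReal (r ^ 2 * a n) := ENNReal.tsum_le_tsum hgap
    _ = ENNReal.ofReal (r ^ 2 * ∑' n, a n) := by
        rw [← ENNReal.ofReal_tsum_of_nonneg (fun n => by have := ha n; positivity)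
          (hsum.mul_left _), tsum_mul_left]

lemma volume_real_compl_inter_Icc {S : Set ℝ} (hS : MeasurableSet S) {r : ℝ} (hr : 0 ≤ r) :
    volume.real (Sᶜ ∩ Icc (-r) r) = 2 * r - volume.real (S ∩ Icc (-r) r) := by
  have := measureReal_inter_add_sdiff (μ := volume) hS (measure_Icc_lt_top (a := -r) (b := r)).ne
  rw [Real.volume_real_Icc_of_le (by linarith)] at this
  rw [inter_comm, ← Set.sdiff_eq, inter_comm]
  linarith

lemma tendsto_density_compl_of_le_sq {S : Set ℝ} (hS : MeasurableSet S) {C : ℝ}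
    (hC : ∀ r, 0 < r → volume.real (S ∩ Icc (-r) r) ≤ C * r ^ 2) :
    Tendsto (fun r => volume.real (Sᶜ ∩ Icc (-r) r) / (2 * r)) (𝓝[>] 0) (𝓝 1) := by
  have hS0 : Tendsto (fun r => volume.real (S ∩ Icc (-r) r) / (2 * r)) (𝓝[>] 0) (𝓝 0) := by
    have hlin : Tendsto (fun r : ℝ => C / 2 * r) (𝓝[>] 0) (𝓝 0) := by
      simpa using (tendsto_nhdsWithin_of_tendsto_nhds
        ((continuous_const_mul (C / 2)).tendsto (0 : ℝ)))
    refine tendsto_of_tendsto_of_tendsto_of_le_of_le' tendsto_const_nhds hlin ?_ ?_ <;>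
      filter_upwards [self_mem_nhdsWithin] with r (hr : 0 < r)
    · positivity
    · rw [div_le_iff₀ (by positivity)]
      linarith [hC r hr]
  have h1 : Tendsto (fun r => 1 - volume.real (S ∩ Icc (-r) r) / (2 * r)) (𝓝[>] 0) (𝓝 1) := by
    simpa using hS0.const_sub 1
  refine h1.congr' ?_
  filter_upwards [self_mem_nhdsWithin] with r (hr : 0 < r)
  rw [volume_real_compl_inter_Icc hS hr.le]
  field_simp

noncomputable def gapBump {a : ℝ} (ha : 0 < a) : ContDiffBump (a + a ^ 3 / 2) where
  rIn := a ^ 3 / 4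
  rOut := a ^ 3 / 2
  rIn_pos := by positivity
  rIn_lt_rOut := by linarith [pow_pos ha 3]

lemma ball_gapBump {a : ℝ} (ha : 0 < a) :
    ball (a + a ^ 3 / 2) (gapBump ha).rOut = Ioo a (a + a ^ 3) := by
  rw [Real.ball_eq_Ioo]
  congr 1 <;> simp only [gapBump] <;> ring

lemma ContDiffBump.setIntegral_normed_of_ball_subset {E : Type*} [NormedAddCommGroup E]
    [NormedSpace ℝ E] [HasContDiffBump E] [MeasurableSpace E] [BorelSpace E]
    [FiniteDimensional ℝ E] {μ : Measure E} [IsLocallyFiniteMeasure μ] [μ.IsOpenPosMeasure]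
    {c : E} (φ : ContDiffBump c) {s : Set E} (hs : ball c φ.rOut ⊆ s) :
    ∫ x in s, φ.normed μ x ∂μ = 1 := by
  rw [setIntegral_eq_integral_of_forall_compl_eq_zero fun x hx => ?_, φ.integral_normed]
  exact Function.notMem_support.mp fun h => hx (hs (φ.support_normed_eq (μ := μ) ▸ h))

theorem stmt4 :
    ∃ (X : Set ℝ) (f : ℕ → ℝ → ℝ),
      MeasurableSet X ∧ (0 : ℝ) ∈ X ∧
      Tendsto (fun r : ℝ => (volume (X ∩ Set.Icc (-r) r)).toReal / (2 * r))
        (𝓝[>] (0 : ℝ)) (𝓝 1) ∧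
      (∀ n, Continuous (f n)) ∧ (∀ n x, 0 ≤ f n x) ∧
      (∀ n, ∫ x : ℝ, f n x = 1) ∧
      (∀ δ : ℝ, 0 < δ →
        Tendsto (fun n => ∫ x in Set.Icc (-δ) δ, f n x) atTop (𝓝 1)) ∧
      (∀ n, ∫ x in X, f n x = 0) := by
  set a : ℕ → ℝ := fun n => (1 / 2) ^ n
  have ha : ∀ n, 0 < a n := fun n => by positivity
  set S := ⋃ n, Ioo (a n) (a n + a n ^ 3)
  have hS : MeasurableSet S := MeasurableSet.iUnion fun _ => measurableSet_Ioo
  refine ⟨Sᶜ, fun n => (gapBump (ha n)).normed volume, hS.compl, ?_, ?_,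
    fun n => (gapBump (ha n)).continuous_normed, fun n => (gapBump (ha n)).nonneg_normed,
    fun n => (gapBump (ha n)).integral_normed, ?_, ?_⟩
  · simp only [S, mem_compl_iff, mem_iUnion, mem_Ioo, not_exists, not_and]
    exact fun n h => absurd h (not_lt.2 (ha n).le)
  · refine tendsto_density_compl_of_le_sq hS (C := 2) fun r hr => ?_
    have := volume_iUnion_Ioo_cube_inter_Icc_le (fun n => (ha n).le) summable_geometric_two r
    rw [tsum_geometric_two, mul_comm] at this
    exact ENNReal.toReal_le_of_le_ofReal (by positivity) this
  · intro δ hδ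
    have hsmall : ∀ᶠ n in atTop, a n < δ / 2 :=
      (tendsto_pow_atTop_nhds_zero_of_lt_one (by norm_num) (by norm_num)).eventually
        (gt_mem_nhds (by linarith))
    refine tendsto_const_nhds.congr' ?_
    filter_upwards [hsmall] with n hn
    refine ((gapBump (ha n)).setIntegral_normed_of_ball_subset ?_).symm
    have hcube : a n ^ 3 ≤ a n :=
      pow_le_of_le_one (ha n).le (pow_le_one₀ (by norm_num) (by norm_num)) (by norm_num)
    rw [ball_gapBump]
    exact fun x hx => ⟨by linarith [hx.1, ha n], by linarith [hx.2]⟩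
  · intro n
    refine setIntegral_eq_zero_of_forall_eq_zero fun x hx => Function.notMem_support.mp fun h => ?_
    rw [ContDiffBump.support_normed_eq, ball_gapBump] at h
    exact hx (mem_iUnion.2 ⟨n, h⟩)
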